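/- Let V be a nonzero finite-dimensional real inner product space, let M be a subset of End(V) closed under adjoints, let Z be the commutant of M in End(V), and let π_Z be the projection of End(V) onto Z along Z^⊥. Let S ∈ End(V) be self-adjoint and satisfy Tr(S∘z) = 0 for every z ∈ Z. Then π_Z(exp(S)) is expanding: ‖π_Z(exp(S))(v)‖ ≥ ‖v‖ for every v ∈ V. -/

import Mathlib

/-!
The commutant `Z` of an adjoint-closed set is closed under adjoints, so the trace form is
positive definite on `Z`; hence `End(V) = Z ⊕ Zᗮ` and `π_Z` commutes with adjoints and
preserves `Tr (· ∘ z)` for `z ∈ Z`. This makes `π_Z` positive: if `B ≥ 0` and `e` is the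
spectral idempotent of `π_Z B` for an eigenvalue `t`, then `e` is a polynomial in `π_Z B`,
so `e ∈ Z` and `t · Tr e = Tr (π_Z B ∘ e) = Tr (B ∘ e) ≥ 0`. Applied to `exp S ≥ 1 + S`,
with `π_Z 1 = 1` and `π_Z S = 0`, this gives `π_Z (exp S) ≥ 1`, and then
`‖v‖² ≤ ⟪π_Z (exp S) v, v⟫ ≤ ‖π_Z (exp S) v‖ ‖v‖`.
-/

open scoped RealInnerProductSpace

/-- The commutant of a set `M` of continuous endomorphisms of `V`:
all `A ∈ End(V)` commuting with every element of `M`. -/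
def setCommutant {V : Type*} [NormedAddCommGroup V] [InnerProductSpace ℝ V]
    [FiniteDimensional ℝ V] (M : Set (V →L[ℝ] V)) : Submodule ℝ (V →L[ℝ] V) where
  carrier := {A | ∀ m ∈ M, A ∘L m = m ∘L A}
  add_mem' := by
    intro a b ha hb m hm
    simp [ContinuousLinearMap.add_comp, ContinuousLinearMap.comp_add, ha m hm, hb m hm]
  zero_mem' := by intro m hm; simp
  smul_mem' := by
    intro c a ha m hm
    simp [ContinuousLinearMap.smul_comp, ContinuousLinearMap.comp_smulₛₗ, ha m hm]

/-- The orthogonal of a subspace `Z` of `End(V)` with respect to the trace form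
`(A, B) ↦ Tr(A ∘ B)`. -/
def traceOrthogonal {V : Type*} [NormedAddCommGroup V] [InnerProductSpace ℝ V]
    [FiniteDimensional ℝ V] (Z : Submodule ℝ (V →L[ℝ] V)) : Submodule ℝ (V →L[ℝ] V) where
  carrier := {A | ∀ z ∈ Z, LinearMap.trace ℝ V (A ∘L z).toLinearMap = 0}
  add_mem' := by
    intro a b ha hb z hz
    rw [ContinuousLinearMap.add_comp, ContinuousLinearMap.coe_add, map_add,
      ha z hz, hb z hz, add_zero]
  zero_mem' := by intro z hz; simp
  smul_mem' := by
    intro c a ha z hz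
    rw [ContinuousLinearMap.smul_comp, ContinuousLinearMap.coe_smul, map_smul,
      ha z hz, smul_zero]

open ContinuousLinearMap
open scoped InnerProduct

theorem LinearMap.IsPositive.trace_eq_zero_iff {𝕜 E : Type*} [RCLike 𝕜] [NormedAddCommGroup E]
    [InnerProductSpace 𝕜 E] [FiniteDimensional 𝕜 E] {T : E →ₗ[𝕜] E} (hT : T.IsPositive) :
    LinearMap.trace 𝕜 E T = 0 ↔ T = 0 := by
  classical
  let b := (stdOrthonormalBasis 𝕜 E).toBasis
  rw [LinearMap.trace_eq_matrix_trace 𝕜 b,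
    ((LinearMap.posSemidef_toMatrix_iff (stdOrthonormalBasis 𝕜 E)).mpr hT).trace_eq_zero_iff,
    ← (LinearMap.toMatrix b b).map_eq_zero_iff]

section Trace

variable {V : Type*} [NormedAddCommGroup V] [InnerProductSpace ℝ V]

variable (V) in
noncomputable def traceForm : LinearMap.BilinForm ℝ (V →L[ℝ] V) :=
  (LinearMap.mul ℝ (V →L[ℝ] V)).compr₂ ((LinearMap.trace ℝ V).comp (coeLM ℝ))

@[simp] theorem traceForm_apply (A B : V →L[ℝ] V) :
    traceForm V A B = LinearMap.trace ℝ V (A ∘L B) := rfl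

variable [FiniteDimensional ℝ V]

theorem trace_adjoint (A : V →L[ℝ] V) : LinearMap.trace ℝ V (A†) = LinearMap.trace ℝ V A := by
  let b := stdOrthonormalBasis ℝ V
  simp only [LinearMap.trace_eq_sum_inner _ b, coe_coe, adjoint_inner_right, real_inner_comm]

theorem trace_comp_comm (A B : V →L[ℝ] V) :
    LinearMap.trace ℝ V (A ∘L B) = LinearMap.trace ℝ V (B ∘L A) :=
  LinearMap.trace_comp_comm' B.toLinearMap A.toLinearMap

theorem traceForm_isRefl : (traceForm V).IsRefl := fun A B h => by
  rwa [traceForm_apply, trace_comp_comm] at h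

theorem traceOrthogonal_eq_orthogonal (Z : Submodule ℝ (V →L[ℝ] V)) :
    traceOrthogonal Z = (traceForm V).orthogonal Z := by
  ext A
  simp only [LinearMap.BilinForm.mem_orthogonal_iff, traceForm_apply, trace_comp_comm _ A]
  rfl

theorem adjoint_mem_traceOrthogonal {Z : Submodule ℝ (V →L[ℝ] V)} (hZ : ∀ z ∈ Z, z† ∈ Z)
    {A : V →L[ℝ] V} (hA : A ∈ traceOrthogonal Z) : A† ∈ traceOrthogonal Z := fun z hz => by
  rw [← adjoint_adjoint z, ← adjoint_comp, trace_adjoint, trace_comp_comm]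
  exact hA _ (hZ z hz)

theorem isCompl_traceOrthogonal {Z : Submodule ℝ (V →L[ℝ] V)} (hZ : ∀ z ∈ Z, z† ∈ Z) :
    IsCompl Z (traceOrthogonal Z) := by
  rw [traceOrthogonal_eq_orthogonal,
    LinearMap.BilinForm.isCompl_orthogonal_iff_disjoint traceForm_isRefl,
    ← traceOrthogonal_eq_orthogonal, Submodule.disjoint_def]
  intro z hz hz'
  have hzz : z ∘L z† = 0 :=
    coe_inj.mp <| (isPositive_self_comp_adjoint z).toLinearMap.trace_eq_zero_iff.mp <|
      hz' _ (hZ z hz)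
  have hz0 : z† = 0 := adjoint_comp_self_eq_zero_iff.mp (by rwa [adjoint_adjoint])
  simpa using congrArg adjoint hz0

theorem exists_mem_add_mem_traceOrthogonal {Z : Submodule ℝ (V →L[ℝ] V)}
    (hZ : ∀ z ∈ Z, z† ∈ Z) (A : V →L[ℝ] V) :
    ∃ z ∈ Z, ∃ w ∈ traceOrthogonal Z, z + w = A :=
  Submodule.mem_sup.mp ((isCompl_traceOrthogonal hZ).sup_eq_top ▸ Submodule.mem_top)

end Trace

structure IsTraceProjection {V : Type*} [NormedAddCommGroup V] [InnerProductSpace ℝ V]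
    [FiniteDimensional ℝ V] (Z : Submodule ℝ (V →L[ℝ] V))
    (π : (V →L[ℝ] V) →ₗ[ℝ] (V →L[ℝ] V)) : Prop where
  apply_of_mem : ∀ A ∈ Z, π A = A
  apply_of_mem_traceOrthogonal : ∀ A ∈ traceOrthogonal Z, π A = 0

namespace IsTraceProjection

variable {V : Type*} [NormedAddCommGroup V] [InnerProductSpace ℝ V] [FiniteDimensional ℝ V]
  {Z : Submodule ℝ (V →L[ℝ] V)} {π : (V →L[ℝ] V) →ₗ[ℝ] (V →L[ℝ] V)}

theorem apply_add (hπ : IsTraceProjection Z π) {z w : V →L[ℝ] V} (hz : z ∈ Z)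
    (hw : w ∈ traceOrthogonal Z) : π (z + w) = z := by
  rw [map_add, hπ.apply_of_mem z hz, hπ.apply_of_mem_traceOrthogonal w hw, add_zero]

theorem apply_mem (hπ : IsTraceProjection Z π) (hZ : ∀ z ∈ Z, z† ∈ Z) (A : V →L[ℝ] V) :
    π A ∈ Z := by
  obtain ⟨z, hz, w, hw, rfl⟩ := exists_mem_add_mem_traceOrthogonal hZ A
  rwa [hπ.apply_add hz hw]

theorem trace_apply_comp (hπ : IsTraceProjection Z π) (hZ : ∀ z ∈ Z, z† ∈ Z) (A : V →L[ℝ] V)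
    {z : V →L[ℝ] V} (hz : z ∈ Z) :
    LinearMap.trace ℝ V (π A ∘L z) = LinearMap.trace ℝ V (A ∘L z) := by
  obtain ⟨y, hy, w, hw, rfl⟩ := exists_mem_add_mem_traceOrthogonal hZ A
  rw [hπ.apply_add hy hw, add_comp, toLinearMap_add, map_add, hw z hz, add_zero]

theorem apply_adjoint (hπ : IsTraceProjection Z π) (hZ : ∀ z ∈ Z, z† ∈ Z) (A : V →L[ℝ] V) :
    π (A†) = (π A)† := by
  obtain ⟨z, hz, w, hw, rfl⟩ := exists_mem_add_mem_traceOrthogonal hZ A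
  rw [map_add, hπ.apply_add (hZ z hz) (adjoint_mem_traceOrthogonal hZ hw), hπ.apply_add hz hw]

end IsTraceProjection

theorem Polynomial.exists_eval_eq_ite {K ι : Type*} [Field K] [DecidableEq K] [Fintype ι]
    (ν : ι → K) (t : K) : ∃ p : Polynomial K, ∀ j, p.eval (ν j) = if ν j = t then 1 else 0 := by
  have hν : ∀ j, ν j ∈ Finset.univ.image ν := fun j => Finset.mem_image_of_mem ν (Finset.mem_univ j)
  refine ⟨Lagrange.basis (Finset.univ.image ν) id t, fun j => ?_⟩
  split_ifs with hj
  · simpa [hj] using Lagrange.eval_basis_self (v := id) (Set.injOn_id _) (hj ▸ hν j)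
  · exact Lagrange.eval_basis_of_ne (v := id) (Ne.symm hj) (hν j)

section Eigenvector

variable {E : Type*} [NormedAddCommGroup E] [NormedSpace ℝ E]

theorem aeval_apply_of_apply_eq_smul {T : E →L[ℝ] E} {v : E} {μ : ℝ} (h : T v = μ • v)
    (p : Polynomial ℝ) : Polynomial.aeval T p v = p.eval μ • v := by
  let f : (E →L[ℝ] E) →ₐ[ℝ] (E →ₗ[ℝ] E) :=
    { toLinearMapRingHom with commutes' := fun _ => rfl }
  rw [← Module.End.aeval_apply_of_mem_apply_eq_smul (f := (T : E →ₗ[ℝ] E)) h]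
  exact congrArg (· v) (Polynomial.aeval_algHom_apply f T p).symm

theorem exp_apply_of_apply_eq_smul [CompleteSpace E] {S : E →L[ℝ] E} {v : E} {μ : ℝ}
    (h : S v = μ • v) :
    NormedSpace.exp S v = Real.exp μ • v := by
  have hpow : ∀ n : ℕ, (S ^ n) v = μ ^ n • v := fun n => by
    simpa using aeval_apply_of_apply_eq_smul h (Polynomial.X ^ n)
  have hsum := (NormedSpace.exp_series_hasSum_exp' (𝕂 := ℝ) S).mapL (apply ℝ E v)
  simp only [apply_apply, smul_apply, hpow, smul_smul] at hsum
  rw [hsum.unique ((NormedSpace.exp_series_hasSum_exp' (𝕂 := ℝ) μ).smul_const v),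
    Real.exp_eq_exp_ℝ]

end Eigenvector

section Spectral

variable {V : Type*} [NormedAddCommGroup V] [InnerProductSpace ℝ V]

theorem trace_comp_eq_sum_filter {ι : Type*} [Fintype ι] (b : OrthonormalBasis ι ℝ V)
    (P : ι → Prop) [DecidablePred P] {e : V →L[ℝ] V} (he : ∀ j, e (b j) = if P j then b j else 0)
    (A : V →L[ℝ] V) :
    LinearMap.trace ℝ V (A ∘L e) = ∑ j with P j, ⟪b j, A (b j)⟫ := by
  rw [LinearMap.trace_eq_sum_inner _ b, Finset.sum_filter]
  refine Finset.sum_congr rfl fun j _ => ?_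
  split_ifs with hj <;> simp [he, hj]

theorem isPositive_of_apply_eq_smul [CompleteSpace V] {ι : Type*} [Fintype ι] {T : V →L[ℝ] V}
    (hT : IsSelfAdjoint T) (b : OrthonormalBasis ι ℝ V) {μ : ι → ℝ}
    (hb : ∀ i, T (b i) = μ i • b i) (hμ : ∀ i, 0 ≤ μ i) : T.IsPositive := by
  refine (isPositive_iff' T).mpr ⟨hT, fun w => ?_⟩
  rw [← b.sum_inner_mul_inner (T w) w]
  refine Finset.sum_nonneg fun i _ => ?_
  rw [← adjoint_inner_right, isSelfAdjoint_iff'.mp hT, hb i, inner_smul_right,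
    real_inner_comm w, mul_assoc]
  exact mul_nonneg (hμ i) (mul_self_nonneg _)

theorem one_add_le_exp [FiniteDimensional ℝ V] {S : V →L[ℝ] V} (hS : IsSelfAdjoint S) :
    1 + S ≤ NormedSpace.exp S := by
  let d := hS.isSymmetric.eigenvectorBasis rfl
  let μ := hS.isSymmetric.eigenvalues rfl
  have hd : ∀ i, S (d i) = μ i • d i := hS.isSymmetric.apply_eigenvectorBasis rfl
  refine isPositive_of_apply_eq_smul (hS.exp.sub ((IsSelfAdjoint.one _).add hS)) d
    (μ := fun i => Real.exp (μ i) - (1 + μ i)) (fun i => ?_)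
    (fun i => sub_nonneg.mpr (by linarith [Real.add_one_le_exp (μ i)]))
  rw [sub_apply, add_apply, exp_apply_of_apply_eq_smul (hd i), one_apply_eq_self, hd i, sub_smul,
    add_smul, one_smul]

theorem norm_le_norm_apply_of_one_le {T : V →L[ℝ] V} (hT : 1 ≤ T) (v : V) : ‖v‖ ≤ ‖T v‖ := by
  have h1 : ‖v‖ ^ 2 ≤ ⟪T v, v⟫ := by
    have := hT.inner_nonneg_left v
    rwa [sub_apply, one_apply_eq_self, inner_sub_left, real_inner_self_eq_norm_sq,
      sub_nonneg] at this
  have h2 : ⟪T v, v⟫ ≤ ‖T v‖ * ‖v‖ := real_inner_le_norm _ _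
  nlinarith [norm_nonneg v, norm_nonneg (T v)]

end Spectral

section Commutant

variable {V : Type*} [NormedAddCommGroup V] [InnerProductSpace ℝ V] [FiniteDimensional ℝ V]
  {M : Set (V →L[ℝ] V)}

theorem setCommutant_eq_centralizer :
    setCommutant M = Subalgebra.toSubmodule (Subalgebra.centralizer ℝ M) := by
  ext A
  exact forall₂_congr fun m _ => eq_comm

theorem one_mem_setCommutant : (1 : V →L[ℝ] V) ∈ setCommutant M := by
  rw [setCommutant_eq_centralizer, Subalgebra.mem_toSubmodule]
  exact one_mem _

theorem aeval_mem_setCommutant {A : V →L[ℝ] V} (hA : A ∈ setCommutant M) (p : Polynomial ℝ) :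
    Polynomial.aeval A p ∈ setCommutant M := by
  rw [setCommutant_eq_centralizer] at hA ⊢
  exact Algebra.adjoin_le (Set.singleton_subset_iff.mpr hA)
    (Polynomial.aeval_mem_adjoin_singleton ℝ A)

theorem adjoint_mem_setCommutant (hM : ∀ m ∈ M, m† ∈ M) {A : V →L[ℝ] V}
    (hA : A ∈ setCommutant M) : A† ∈ setCommutant M := fun m hm => by
  simpa only [adjoint_comp, adjoint_adjoint] using (congrArg adjoint (hA _ (hM m hm))).symm

end Commutant

namespace IsTraceProjection

variable {V : Type*} [NormedAddCommGroup V] [InnerProductSpace ℝ V] [FiniteDimensional ℝ V]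
  {M : Set (V →L[ℝ] V)} {π : (V →L[ℝ] V) →ₗ[ℝ] (V →L[ℝ] V)}

theorem isPositive_apply (hM : ∀ m ∈ M, m† ∈ M) (hπ : IsTraceProjection (setCommutant M) π)
    {B : V →L[ℝ] V} (hB : B.IsPositive) : (π B).IsPositive := by
  classical
  have hZ : ∀ z ∈ setCommutant M, z† ∈ setCommutant M := fun _ => adjoint_mem_setCommutant hM
  have hC : IsSelfAdjoint (π B) := by
    rw [isSelfAdjoint_iff', ← hπ.apply_adjoint hZ, isSelfAdjoint_iff'.mp hB.isSelfAdjoint]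
  let c := hC.isSymmetric.eigenvectorBasis rfl
  let ν := hC.isSymmetric.eigenvalues rfl
  have hc : ∀ j, π B (c j) = ν j • c j := hC.isSymmetric.apply_eigenvectorBasis rfl
  refine isPositive_of_apply_eq_smul hC c hc fun i => ?_
  obtain ⟨p, hp⟩ := Polynomial.exists_eval_eq_ite ν (ν i)
  have he : ∀ j, Polynomial.aeval (π B) p (c j) = if ν j = ν i then c j else 0 := fun j => by
    rw [aeval_apply_of_apply_eq_smul (hc j), hp j, ite_smul, one_smul, zero_smul]
  set s := Finset.univ.filter fun j => ν j = ν i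
  have htrace := hπ.trace_apply_comp hZ B (aeval_mem_setCommutant (hπ.apply_mem hZ B) p)
  rw [trace_comp_eq_sum_filter c _ he, trace_comp_eq_sum_filter c _ he] at htrace
  have hCe : ∑ j ∈ s, ⟪c j, π B (c j)⟫ = (s.card : ℝ) * ν i := by
    rw [Finset.cast_card, Finset.sum_mul]
    refine Finset.sum_congr rfl fun j hj => ?_
    rw [hc j, inner_smul_right, real_inner_self_eq_norm_sq, c.orthonormal.1 j,
      (Finset.mem_filter.mp hj).2]
    ring
  have hBe : 0 ≤ ∑ j ∈ s, ⟪c j, B (c j)⟫ :=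
    Finset.sum_nonneg fun j _ => hB.inner_nonneg_right (c j)
  have hcard : (0 : ℝ) < s.card :=
    Nat.cast_pos.mpr (Finset.card_pos.mpr ⟨i, Finset.mem_filter.mpr ⟨Finset.mem_univ i, rfl⟩⟩)
  exact nonneg_of_mul_nonneg_right (hCe ▸ htrace ▸ hBe) hcard

theorem monotone (hM : ∀ m ∈ M, m† ∈ M) (hπ : IsTraceProjection (setCommutant M) π) :
    Monotone π := fun A B h => by
  rw [le_def, ← map_sub]
  exact hπ.isPositive_apply hM h

end IsTraceProjection

theorem norm_proj_commutant_exp_ge_general {V : Type*} [NormedAddCommGroup V]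
    [InnerProductSpace ℝ V] [FiniteDimensional ℝ V]
    (M : Set (V →L[ℝ] V))
    (hM : ∀ m ∈ M, ContinuousLinearMap.adjoint m ∈ M)
    (πZ : (V →L[ℝ] V) →ₗ[ℝ] (V →L[ℝ] V))
    (hπZid : ∀ A ∈ setCommutant M, πZ A = A)
    (hπZzero : ∀ A ∈ traceOrthogonal (setCommutant M), πZ A = 0)
    (S : V →L[ℝ] V) (hS : ContinuousLinearMap.adjoint S = S)
    (hSZ : ∀ z ∈ setCommutant M, LinearMap.trace ℝ V (S ∘L z).toLinearMap = 0) :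
    ∀ v : V, ‖(πZ (NormedSpace.exp S)) v‖ ≥ ‖v‖ := by
  have hπ : IsTraceProjection (setCommutant M) πZ := ⟨hπZid, hπZzero⟩
  have hπ_one_add : πZ (1 + S) = 1 := hπ.apply_add one_mem_setCommutant hSZ
  have hle : 1 ≤ πZ (NormedSpace.exp S) :=
    hπ_one_add ▸ hπ.monotone hM (one_add_le_exp (isSelfAdjoint_iff'.mpr hS))
  exact norm_le_norm_apply_of_one_le hle

/-- **The projection of `exp(S)` on the commutant is expanding.**
Let `M ⊆ End(V)` be closed under adjoints, `Z` its commutant and `π_Z` the projection of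
`End(V)` onto `Z` along the trace-form orthogonal `Z^⊥`.  If `S` is self-adjoint and
trace-orthogonal to `Z`, then `‖π_Z(exp S) v‖ ≥ ‖v‖` for every `v ∈ V`. -/
theorem norm_proj_commutant_exp_ge {V : Type*} [NormedAddCommGroup V]
    [InnerProductSpace ℝ V] [FiniteDimensional ℝ V] [Nontrivial V]
    (M : Set (V →L[ℝ] V))
    (hM : ∀ m ∈ M, ContinuousLinearMap.adjoint m ∈ M)
    (πZ : (V →L[ℝ] V) →ₗ[ℝ] (V →L[ℝ] V))
    (hπZmem : ∀ A, πZ A ∈ setCommutant M)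
    (hπZid : ∀ A ∈ setCommutant M, πZ A = A)
    (hπZzero : ∀ A ∈ traceOrthogonal (setCommutant M), πZ A = 0)
    (S : V →L[ℝ] V) (hS : ContinuousLinearMap.adjoint S = S)
    (hSZ : ∀ z ∈ setCommutant M, LinearMap.trace ℝ V (S ∘L z).toLinearMap = 0) :
    ∀ v : V, ‖(πZ (NormedSpace.exp S)) v‖ ≥ ‖v‖ :=
  norm_proj_commutant_exp_ge_general M hM πZ hπZid hπZzero S hS hSZ
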